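/- Let n ≥ 2, f > 0, and λ₁ ≥ ... ≥ λₙ satisfy Σᵢ arctan(λᵢ/f) ≥ (n-2)π/2, λₙ < 0. Let u_p, f_p be real numbers (p fixed) and set xᵢ = (f·uᵢᵢₚ - λᵢ f_p)/(f² + λᵢ²) for arbitrary reals u₁₁ₚ,...,uₙₙₚ subject to Σᵢ xᵢ = 0. Then Σᵢ (λᵢ/(f²+λᵢ²)²)·(f·uᵢᵢₚ - λᵢ f_p)² ≥ 0. -/

import Mathlib

/-!
Write `xᵢ` for the i-th quotient in `hx`, so that the claimed sum is `∑ λᵢ xᵢ²` with `∑ xᵢ = 0`.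
The phase condition forces every `λᵢ` except the last to be positive, and, by subadditivity of
`arctan` on `[0, ∞)` applied to `arctan (f / λᵢ) = π / 2 - arctan (λᵢ / f)`, it gives
`∑ λᵢ⁻¹ ≤ 0`. Cauchy–Schwarz then bounds the single negative term:
`λₙ xₙ² = λₙ (∑_{i<n} xᵢ)² ≥ λₙ (∑_{i<n} λᵢ⁻¹) (∑_{i<n} λᵢ xᵢ²) ≥ -∑_{i<n} λᵢ xᵢ²`.
-/

open Real Finset

namespace Real

lemma arctan_add_le_of_nonneg {a b : ℝ} (ha : 0 ≤ a) (hb : 0 ≤ b) :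
    arctan (a + b) ≤ arctan a + arctan b := by
  rcases lt_or_ge (a * b) 1 with h | h
  · rw [arctan_add h]
    apply arctan_strictMono.monotone
    rcases eq_or_lt_of_le (add_nonneg ha hb) with h0 | h0
    · simp [← h0]
    · rw [le_div_iff₀ (by nlinarith)]
      nlinarith [mul_nonneg (add_nonneg ha hb) (mul_nonneg ha hb)]
  · have hb' : 0 < b := by nlinarith
    -- `a ≥ b⁻¹`, so `arctan a + arctan b ≥ arctan b⁻¹ + arctan b = π / 2`.
    have h1 : arctan b⁻¹ ≤ arctan a := by
      apply arctan_strictMono.monotone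
      rw [inv_le_iff_one_le_mul₀ hb']
      linarith [mul_comm a b ▸ h]
    rw [arctan_inv_of_pos hb'] at h1
    linarith [arctan_lt_pi_div_two (a + b)]

lemma arctan_sum_le_sum_arctan {ι : Type*} (s : Finset ι) (a : ι → ℝ)
    (ha : ∀ i ∈ s, 0 ≤ a i) : arctan (∑ i ∈ s, a i) ≤ ∑ i ∈ s, arctan (a i) := by
  induction s using Finset.cons_induction with
  | empty => simp
  | cons i s his ih =>
    rw [sum_cons, sum_cons]
    have hs : ∀ j ∈ s, 0 ≤ a j := fun j hj => ha j (mem_cons_of_mem hj)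
    calc arctan (a i + ∑ j ∈ s, a j)
        ≤ arctan (a i) + arctan (∑ j ∈ s, a j) :=
          arctan_add_le_of_nonneg (ha i (mem_cons_self i s)) (sum_nonneg hs)
      _ ≤ arctan (a i) + ∑ j ∈ s, arctan (a j) := by linarith [ih hs]

lemma sum_inv_le_inv_of_arctan {ι : Type*} (s : Finset ι) {a : ι → ℝ} {b : ℝ}
    (ha : ∀ i ∈ s, 0 < a i) (hb : 0 < b)
    (hsum : ((#s : ℝ) - 1) * π / 2 + arctan b ≤ ∑ i ∈ s, arctan (a i)) :
    ∑ i ∈ s, (a i)⁻¹ ≤ b⁻¹ := by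
  refine arctan_strictMono.le_iff_le.mp ?_
  calc arctan (∑ i ∈ s, (a i)⁻¹)
      ≤ ∑ i ∈ s, arctan (a i)⁻¹ :=
        arctan_sum_le_sum_arctan s _ fun i hi => (inv_pos.mpr (ha i hi)).le
    _ = ∑ i ∈ s, (π / 2 - arctan (a i)) := sum_congr rfl fun i hi => arctan_inv_of_pos (ha i hi)
    _ ≤ arctan b⁻¹ := by
      rw [sum_sub_distrib, sum_const, nsmul_eq_mul, arctan_inv_of_pos hb]
      linarith

end Real

section PhaseCondition

variable {ι : Type*} [Fintype ι] {a : ι → ℝ}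

lemma arctan_add_arctan_nonneg_of_phase
    (hsum : ((Fintype.card ι : ℝ) - 2) * π / 2 ≤ ∑ k, arctan (a k)) {i j : ι} (hij : i ≠ j) :
    0 ≤ arctan (a i) + arctan (a j) := by
  classical
  -- the gaps `π / 2 - arctan (a k)` are nonnegative and, by `hsum`, add up to at most `π`
  have hgap : ∀ k ∈ univ, 0 ≤ π / 2 - arctan (a k) :=
    fun k _ => sub_nonneg.mpr (arctan_lt_pi_div_two _).le
  have hpair := sum_le_sum_of_subset_of_nonneg (subset_univ {i, j}) fun k hk _ => hgap k hk
  rw [sum_pair hij, sum_sub_distrib, sum_const, card_univ, nsmul_eq_mul] at hpair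
  linarith

lemma pos_of_phase (hsum : ((Fintype.card ι : ℝ) - 2) * π / 2 ≤ ∑ k, arctan (a k))
    {i j : ι} (hj : a j < 0) (hij : i ≠ j) : 0 < a i := by
  have := arctan_add_arctan_nonneg_of_phase hsum hij
  have := arctan_lt_zero.mpr hj
  exact arctan_pos.mp (by linarith)

lemma sum_inv_nonpos_of_phase (hsum : ((Fintype.card ι : ℝ) - 2) * π / 2 ≤ ∑ k, arctan (a k))
    {j : ι} (hj : a j < 0) : ∑ i, (a i)⁻¹ ≤ 0 := by
  classical
  have hcard : ((#(univ.erase j) : ℕ) : ℝ) = Fintype.card ι - 1 := by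
    rw [card_erase_of_mem (mem_univ j), card_univ, Nat.cast_pred (Fintype.card_pos_iff.mpr ⟨j⟩)]
  have hrest := sum_inv_le_inv_of_arctan (univ.erase j) (a := a) (b := -a j)
    (fun i hi => pos_of_phase hsum hj (ne_of_mem_erase (s := univ) hi)) (neg_pos.mpr hj) (by
      rw [hcard, arctan_neg, sum_erase_eq_sub (mem_univ j)]
      linarith)
  rw [inv_neg] at hrest
  rw [← sum_erase_add _ _ (mem_univ j)]
  linarith

end PhaseCondition

lemma sum_mul_sq_nonneg_of_sum_inv_nonpos {ι : Type*} [Fintype ι] {a x : ι → ℝ} {j : ι}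
    (hpos : ∀ i, i ≠ j → 0 < a i) (hinv : ∑ i, (a i)⁻¹ ≤ 0) (hx : ∑ i, x i = 0) :
    0 ≤ ∑ i, a i * x i ^ 2 := by
  classical
  rcases le_or_gt 0 (a j) with hj | hj
  · refine sum_nonneg fun i _ => mul_nonneg ?_ (sq_nonneg _)
    rcases eq_or_ne i j with rfl | hi
    exacts [hj, (hpos i hi).le]
  set s := univ.erase j
  have hs : ∀ i ∈ s, 0 < a i := fun i hi => hpos i (ne_of_mem_erase hi)
  set A := ∑ i ∈ s, (a i)⁻¹
  set B := ∑ i ∈ s, a i * x i ^ 2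
  have hB : 0 ≤ B := sum_nonneg fun i hi => mul_nonneg (hs i hi).le (sq_nonneg _)
  have hA : A ≤ -(a j)⁻¹ := by
    rw [← sum_erase_add _ _ (mem_univ j)] at hinv
    linarith
  have hxj : x j = -∑ i ∈ s, x i := by
    rw [← sum_erase_add _ _ (mem_univ j)] at hx
    linarith
  have hCS : (∑ i ∈ s, x i) ^ 2 ≤ A * B :=
    sum_sq_le_sum_mul_sum_of_sq_le_mul s (fun i hi => (inv_pos.mpr (hs i hi)).le)
      (fun i hi => mul_nonneg (hs i hi).le (sq_nonneg _))
      (fun i hi => by rw [← mul_assoc, inv_mul_cancel₀ (hs i hi).ne', one_mul])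
  have hlast : -B ≤ a j * x j ^ 2 := calc
    -B = a j * (-(a j)⁻¹ * B) := by rw [← mul_assoc, mul_neg, mul_inv_cancel₀ hj.ne]; ring
    _ ≤ a j * (A * B) := mul_le_mul_of_nonpos_left (mul_le_mul_of_nonneg_right hA hB) hj.le
    _ ≤ a j * x j ^ 2 := by rw [hxj, neg_sq]; exact mul_le_mul_of_nonpos_left hCS hj.le
  rw [← sum_erase_add _ _ (mem_univ j)]
  linarith

theorem stmt_19 (n : ℕ) (hn : 2 ≤ n) (f fp : ℝ) (hf : 0 < f)
    (lam : Fin n → ℝ)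
    (hsum : ((n : ℝ) - 2) * Real.pi / 2 ≤ ∑ i, Real.arctan (lam i / f))
    (hneg : lam ⟨n - 1, by omega⟩ < 0)
    (up : Fin n → ℝ)
    (hx : ∑ i, (f * up i - lam i * fp) / (f ^ 2 + lam i ^ 2) = 0) :
    0 ≤ ∑ i, lam i / (f ^ 2 + lam i ^ 2) ^ 2 * (f * up i - lam i * fp) ^ 2 := by
  replace hsum : ((Fintype.card (Fin n) : ℝ) - 2) * π / 2 ≤ ∑ i, arctan (lam i / f) := by
    rwa [Fintype.card_fin]
  have hneg' : lam ⟨n - 1, by omega⟩ / f < 0 := div_neg_of_neg_of_pos hneg hf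
  have key := sum_mul_sq_nonneg_of_sum_inv_nonpos
    (fun i hi => pos_of_phase hsum hneg' hi) (sum_inv_nonpos_of_phase hsum hneg') hx
  have hterm : ∀ i, lam i / (f ^ 2 + lam i ^ 2) ^ 2 * (f * up i - lam i * fp) ^ 2 =
      f * (lam i / f * ((f * up i - lam i * fp) / (f ^ 2 + lam i ^ 2)) ^ 2) := fun i => by
    have : f ^ 2 + lam i ^ 2 ≠ 0 := by positivity
    field_simp
  rw [sum_congr rfl fun i _ => hterm i, ← mul_sum]
  exact mul_nonneg hf.le key
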